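/- In a median algebra M with subset X, an element x ∈ X is closest to y (meaning x ∈ [y,z] for all z ∈ X) if and only if the separator Δ(x,y) equals the separator Δ(X,y). -/

import Mathlib

/-- A median algebra: a set with a ternary median operation satisfying (Med 1)-(Med 3). -/
structure MedianAlgebra (M : Type*) where
  m : M → M → M → M
  comm₁ : ∀ x y z, m x y z = m x z y
  comm₂ : ∀ x y z, m x y z = m y z x
  idem : ∀ x y, m x x y = x
  assoc : ∀ x y z u v, m (m x y z) u v = m x (m y u v) (m z u v)

namespace MedianAlgebra

variable {M : Type*}

/-- The interval `[x,y] = {z | z = m x y z}`. -/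
def I (A : MedianAlgebra M) (x y : M) : Set M := {z | z = A.m x y z}

/-- A subset is convex if it contains the interval between any two of its points. -/
def Conv (A : MedianAlgebra M) (C : Set M) : Prop :=
  ∀ x ∈ C, ∀ y ∈ C, A.I x y ⊆ C

/-- A half space is a convex set with convex complement. -/
def Halfspace (A : MedianAlgebra M) (H : Set M) : Prop :=
  A.Conv H ∧ A.Conv Hᶜ

/-- The convex hull of a set: the intersection of all convex sets containing it. -/
def hull (A : MedianAlgebra M) (X : Set M) : Set M :=
  ⋂₀ {C | A.Conv C ∧ X ⊆ C}

/-- The separator `Δ(X,Y)`: half spaces containing `X` and disjoint from `Y`. -/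
def sep (A : MedianAlgebra M) (X Y : Set M) : Set (Set M) :=
  {H | A.Halfspace H ∧ X ⊆ H ∧ Y ⊆ Hᶜ}

end MedianAlgebra

/-!
If `x ∈ [y,z]` for all `z ∈ X`, a half space containing `x` but not `y` contains every `z ∈ X`,
since otherwise `y, z` lie in its convex complement and so does `x ∈ [y,z]`. Conversely, if
`x ∉ [y,z]` for some `z ∈ X`, Kakutani's separation theorem yields a half space containing `x`
and disjoint from the convex set `[y,z]`; it lies in `Δ(x,y)` but not in `Δ(X,y)`. Separation
comes from Zorn's lemma: a maximal convex set `W ⊇ [y,z]` avoiding `x` has convex complement.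
-/

namespace MedianAlgebra

variable {M : Type*} (A : MedianAlgebra M)

lemma m_swap₁₂ (x y z : M) : A.m x y z = A.m y x z := by
  rw [A.comm₂ x y z, A.comm₁]

lemma m_idem_mid (x y : M) : A.m x y x = x := by
  rw [A.comm₁]; exact A.idem x y

lemma m_idem_right (x y : M) : A.m x y y = y := by
  rw [A.comm₂]; exact A.idem y x

lemma left_mem_I (x y : M) : x ∈ A.I x y := (A.m_idem_mid x y).symm

lemma right_mem_I (x y : M) : y ∈ A.I x y := (A.m_idem_right x y).symm

lemma m_rotate (x y z : M) : A.m x y z = A.m z x y := by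
  rw [A.comm₂ x y z, A.comm₂]

lemma m_mem_I (x y z : M) : A.m x y z ∈ A.I x y := by
  show A.m x y z = A.m x y (A.m x y z)
  rw [A.m_rotate x y (A.m x y z), A.m_rotate x y z, A.assoc, A.idem, A.m_idem_mid]

lemma conv_I (x y : M) : A.Conv (A.I x y) := by
  intro u hu v hv t ht
  have hu' : A.m u x y = u := (A.comm₂ u x y).trans hu.symm
  have hv' : A.m v x y = v := (A.comm₂ v x y).trans hv.symm
  have ht' : t = A.m t u v := ht.trans (A.m_rotate u v t)
  show t = A.m x y t
  calc t = A.m t u v := ht'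
    _ = A.m (A.m t u v) x y := by rw [A.assoc, hu', hv']
    _ = A.m x y t := by rw [← ht']; exact A.comm₂ t x y

lemma mem_I_trans {t u d f : M} (ht : t ∈ A.I u d) (hd : d ∈ A.I u f) : t ∈ A.I u f := by
  have hd' : A.m d u f = d := (A.comm₂ d u f).trans hd.symm
  have ht' : A.m t u d = t := (A.comm₂ t u d).trans ht.symm
  show t = A.m u f t
  calc t = A.m t (A.m u u f) (A.m d u f) := by rw [A.idem, hd', ht']
    _ = A.m (A.m t u d) u f := (A.assoc t u d u f).symm
    _ = A.m u f t := by rw [ht']; exact A.comm₂ t u f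

lemma mem_I_m_of_mem_I {t a b u c : M} (ht : t ∈ A.I a b) (ha : a ∈ A.I u c) :
    t ∈ A.I u (A.m c b t) := by
  have ha' : A.m u a c = a := (A.comm₁ u a c).trans ha.symm
  show t = A.m u (A.m c b t) t
  calc t = A.m a b t := ht
    _ = A.m (A.m u a c) b t := by rw [ha']
    _ = A.m u (A.m c b t) (A.m a b t) := by rw [A.assoc, A.comm₁]
    _ = A.m u (A.m c b t) t := by rw [← ht]

lemma Conv.biUnion_I {C : Set M} (hC : A.Conv C) (u : M) :
    A.Conv (⋃ c ∈ C, A.I u c) := by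
  simp only [Conv, Set.subset_def, Set.mem_iUnion₂, exists_prop]
  rintro a ⟨c₁, hc₁, ha⟩ b ⟨c₂, hc₂, hb⟩ t ht
  have htd : t ∈ A.I u (A.m c₁ b t) := A.mem_I_m_of_mem_I ht ha
  have hdb : A.m c₁ b t ∈ A.I b c₁ := by
    show _ = A.m b c₁ _
    rw [A.m_swap₁₂ b c₁]
    exact A.m_mem_I c₁ b t
  exact ⟨A.m c₂ c₁ (A.m c₁ b t), hC c₂ hc₂ c₁ hc₁ (A.m_mem_I _ _ _),
    A.mem_I_trans htd (A.mem_I_m_of_mem_I hdb hb)⟩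

/-- The median identity behind the convexity of the complement of a maximal convex set. -/
lemma mem_I_m_of_mem_I_of_mem_I {x u v w c₁ c₂ : M} (h₁ : x ∈ A.I u c₁) (h₂ : x ∈ A.I v c₂)
    (hw : w ∈ A.I u v) : x ∈ A.I w (A.m c₁ c₂ x) := by
  have h₁' : A.m u c₁ x = x := h₁.symm
  have h₂' : A.m v c₂ x = x := h₂.symm
  have hw' : w = A.m w u v := hw.trans (A.m_rotate u v w)
  have hu : A.m (A.m u c₂ x) c₁ x = x :=
    calc A.m (A.m u c₂ x) c₁ x = A.m u (A.m c₁ c₂ x) x := by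
          rw [A.assoc, A.m_swap₁₂ c₂ c₁, A.m_idem_mid]
      _ = A.m c₁ (A.m c₂ u x) x := by
          rw [A.m_swap₁₂, A.assoc, A.m_idem_mid]
      _ = x := by
          rw [A.m_swap₁₂, A.assoc, h₁', A.m_idem_mid, A.m_idem_right]
  have hv : A.m c₂ w x = A.m w (A.m u c₂ x) x :=
    calc A.m c₂ w x = A.m (A.m w u v) c₂ x := by rw [A.m_swap₁₂, ← hw']
      _ = A.m w (A.m u c₂ x) x := by rw [A.assoc, h₂']
  show x = A.m w (A.m c₁ c₂ x) x
  calc x = A.m c₁ (A.m w (A.m u c₂ x) x) x := by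
        rw [A.m_swap₁₂, A.assoc, hu, A.m_idem_mid, A.m_idem_right]
    _ = A.m (A.m c₁ c₂ x) w x := by
        rw [← hv, A.assoc c₁ c₂ x w x, A.m_idem_mid]
    _ = A.m w (A.m c₁ c₂ x) x := A.m_swap₁₂ _ _ _

lemma conv_sUnion_of_isChain {c : Set (Set M)} (hconv : ∀ W ∈ c, A.Conv W)
    (hchain : IsChain (· ⊆ ·) c) : A.Conv (⋃₀ c) := by
  rintro p ⟨W₁, hW₁, hp⟩ q ⟨W₂, hW₂, hq⟩ t ht
  rcases hchain.total hW₁ hW₂ with h | h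
  · exact ⟨W₂, hW₂, hconv W₂ hW₂ p (h hp) q hq ht⟩
  · exact ⟨W₁, hW₁, hconv W₁ hW₁ p hp q (h hq) ht⟩

lemma exists_maximal_conv_not_mem {C : Set M} (hC : A.Conv C) {x : M} (hx : x ∉ C) :
    ∃ W, C ⊆ W ∧ Maximal (fun W => A.Conv W ∧ x ∉ W) W := by
  refine zorn_subset_nonempty {W | A.Conv W ∧ x ∉ W}
    (fun c hc hchain _ => ⟨⋃₀ c, ⟨?_, ?_⟩, fun W hW => Set.subset_sUnion_of_mem hW⟩) C ⟨hC, hx⟩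
  · exact A.conv_sUnion_of_isChain (fun W hW => (hc hW).1) hchain
  · rintro ⟨W, hW, hxW⟩
    exact (hc hW).2 hxW

variable {A} in
lemma exists_mem_I_of_maximal {W : Set M} {x : M}
    (hW : Maximal (fun W => A.Conv W ∧ x ∉ W) W) (hWne : W.Nonempty) {u : M} (hu : u ∉ W) :
    ∃ c ∈ W, x ∈ A.I u c := by
  by_contra! hx
  have hxJ : x ∉ ⋃ c ∈ W, A.I u c := by
    simpa only [Set.mem_iUnion₂, exists_prop, not_exists, not_and] using hx
  have hJW : ⋃ c ∈ W, A.I u c ⊆ W :=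
    hW.2 ⟨hW.1.1.biUnion_I A u, hxJ⟩ fun c hc => Set.mem_biUnion hc (A.right_mem_I u c)
  obtain ⟨c, hc⟩ := hWne
  exact hu (hJW (Set.mem_biUnion hc (A.left_mem_I u c)))

variable {A} in
lemma conv_compl_of_maximal {W : Set M} {x : M}
    (hW : Maximal (fun W => A.Conv W ∧ x ∉ W) W) (hWne : W.Nonempty) : A.Conv Wᶜ := by
  intro u hu v hv t ht htW
  obtain ⟨c₁, hc₁, h₁⟩ := exists_mem_I_of_maximal hW hWne hu
  obtain ⟨c₂, hc₂, h₂⟩ := exists_mem_I_of_maximal hW hWne hv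
  have hm : A.m c₁ c₂ x ∈ W := hW.1.1 c₁ hc₁ c₂ hc₂ (A.m_mem_I c₁ c₂ x)
  exact hW.1.2 (hW.1.1 t htW _ hm (A.mem_I_m_of_mem_I_of_mem_I h₁ h₂ ht))

theorem exists_halfspace_separating {C : Set M} (hC : A.Conv C) (hCne : C.Nonempty) {x : M}
    (hx : x ∉ C) : ∃ H, A.Halfspace H ∧ x ∈ H ∧ C ⊆ Hᶜ := by
  obtain ⟨W, hCW, hW⟩ := A.exists_maximal_conv_not_mem hC hx
  refine ⟨Wᶜ, ⟨conv_compl_of_maximal hW (hCne.mono hCW), ?_⟩, hW.1.2, ?_⟩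
  · rw [compl_compl]; exact hW.1.1
  · rw [compl_compl]; exact hCW

variable {A} in
lemma Halfspace.mem_of_mem_I {H : Set M} (hH : A.Halfspace H) {x y z : M} (hx : x ∈ H)
    (hy : y ∉ H) (hxyz : x ∈ A.I y z) : z ∈ H := by
  by_contra hz
  exact hH.2 y hy z hz hxyz hx

lemma mem_sep_singleton {H : Set M} {x y : M} :
    H ∈ A.sep {x} {y} ↔ A.Halfspace H ∧ x ∈ H ∧ y ∉ H := by
  simp only [sep, Set.singleton_subset_iff, Set.mem_ofPred_eq, Set.mem_compl_iff]

lemma sep_subset_sep_left {X X' Y : Set M} (h : X' ⊆ X) : A.sep X Y ⊆ A.sep X' Y :=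
  fun _ ⟨hH, hX, hY⟩ => ⟨hH, h.trans hX, hY⟩

end MedianAlgebra

open MedianAlgebra in
theorem closest_iff_sep_eq {M : Type*} (A : MedianAlgebra M) (X : Set M) (x : M)
    (hx : x ∈ X) (y : M) :
    (∀ z ∈ X, x ∈ A.I y z) ↔ A.sep {x} {y} = A.sep X {y} := by
  constructor
  · intro hclosest
    refine (Set.Subset.antisymm ?_ (A.sep_subset_sep_left (Set.singleton_subset_iff.2 hx)))
    intro H hH
    obtain ⟨hHalf, hxH, hyH⟩ := (A.mem_sep_singleton).1 hH
    exact ⟨hHalf, fun z hz => hHalf.mem_of_mem_I hxH hyH (hclosest z hz),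
      Set.singleton_subset_iff.2 hyH⟩
  · intro hsep z hz
    by_contra hxI
    obtain ⟨H, hHalf, hxH, hIH⟩ :=
      A.exists_halfspace_separating (A.conv_I y z) ⟨y, A.left_mem_I y z⟩ hxI
    have hH : H ∈ A.sep X {y} :=
      hsep ▸ (A.mem_sep_singleton).2 ⟨hHalf, hxH, hIH (A.left_mem_I y z)⟩
    exact hIH (A.right_mem_I y z) (hH.2.1 hz)
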